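/- arXiv:math/0611206 — 4 statements merged into one kernel-verified Lean document; each statement's English description precedes it below -/
import Mathlib

section
/- Let g(z) = z² · (α − z)/(1 − conj(α)z) for α in the open unit disk. Then g(1) = g(i) if and only if |α − (1+i)| = 1, i.e., α lies on the circle of radius 1 centered at 1+i. -/
open Complex

/-! Since `|α| < 1`, the denominators `1 - ᾱ` and `1 - ᾱ i` do not vanish, and clearing them
turns `g 1 = g i` into `(α - 1)(1 - ᾱ i) + (α - i)(1 - ᾱ) = 0`. The left side equals
`-(1 + i)(|α - (1 + i)|² - 1)`, as one checks by expanding `|α - (1 + i)|² = (α - 1 - i)(ᾱ - 1 + i)`. -/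

lemma one_sub_conj_mul_ne_zero {α z : ℂ} (hα : ‖α‖ < 1) (hz : ‖z‖ ≤ 1) :
    1 - (starRingEnd ℂ) α * z ≠ 0 := by
  intro h
  have hnorm : ‖(starRingEnd ℂ) α * z‖ = 1 := by
    rw [← sub_eq_zero.mp h, norm_one]
  rw [norm_mul, RCLike.norm_conj] at hnorm
  nlinarith [norm_nonneg α, norm_nonneg z]

-- Stated literally in the shape that cross-multiplying `g 1 = g i` produces.
lemma cross_sub_eq_neg_mul_normSq_sub_one (α : ℂ) :
    (α - 1) * (1 - (starRingEnd ℂ) α * I) - I ^ 2 * (α - I) * (1 - (starRingEnd ℂ) α * 1)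
      = -(1 + I) * ((normSq (α - (1 + I)) : ℂ) - 1) := by
  rw [← mul_conj, map_sub, map_add, map_one, conj_I, I_sq]
  linear_combination (α - (starRingEnd ℂ) α - 1 - I) * I_sq

/-- For `g(z) = z² (α − z)/(1 − conj α · z)` with `|α| < 1`, one has `g(1) = g(i)`
if and only if `α` lies on the circle of radius `1` centered at `1 + i`. -/
theorem stmt_5 (α : ℂ) (hα : ‖α‖ < 1) (g : ℂ → ℂ)
    (hg : ∀ z : ℂ, g z = z ^ 2 * ((α - z) / (1 - (starRingEnd ℂ) α * z))) :
    g 1 = g Complex.I ↔ ‖α - (1 + Complex.I)‖ = 1 := by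
  have h1 := one_sub_conj_mul_ne_zero hα (z := 1) norm_one.le
  have hI := one_sub_conj_mul_ne_zero hα (z := I) norm_I.le
  have h1I : (1 + I : ℂ) ≠ 0 := by
    intro h
    simpa using congrArg im h
  rw [hg, hg, one_pow, one_mul, ← mul_div_assoc, div_eq_div_iff h1 hI, ← sub_eq_zero,
    cross_sub_eq_neg_mul_normSq_sub_one, mul_eq_zero, or_iff_right (neg_ne_zero.mpr h1I),
    sub_eq_zero, ofReal_eq_one, normSq_eq_norm_sq,
    pow_eq_one_iff_of_nonneg (norm_nonneg _) two_ne_zero]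
end

section
/- Let f = p~/p be a finite Blaschke product with zeros in the open disk. Then the zero set of F(z,w) = (p(z)p~(w) − p(w)p~(z))/(z−w) in ℂ² is contained in (𝔻×𝔻) ∪ (𝕋×𝕋) ∪ (𝔼×𝔼), where 𝔻 is the open unit disk, 𝕋 the unit circle, 𝔼 the exterior {|z|>1} (restricting to points where p(z)p(w) ≠ 0). -/
open Complex Finset ComplexConjugate

/-!
The identity `‖1 - ā z‖² - ‖z - a‖² = (1 - ‖a‖²)(1 - ‖z‖²)` shows that for `‖a‖ < 1` the
factor `‖z - a‖` is smaller than, equal to, or larger than `‖1 - ā z‖` exactly as `‖z‖` is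
smaller than, equal to, or larger than `1`. Multiplying over the (nonempty) set of zeros, the
same trichotomy holds for `‖p̃ z‖` against `‖p z‖`, i.e. for `‖f z‖` against `1`. A zero of `F`
with `p z p w ≠ 0` forces `‖f z‖ = ‖f w‖`, so `z` and `w` fall in the same case.
-/

theorem norm_one_sub_conj_mul_sq_sub_norm_sub_sq (a z : ℂ) :
    ‖1 - conj a * z‖ ^ 2 - ‖z - a‖ ^ 2 = (1 - ‖a‖ ^ 2) * (1 - ‖z‖ ^ 2) := by
  simp only [Complex.sq_norm, normSq_apply, sub_re, sub_im, mul_re, mul_im, one_re, one_im,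
    conj_re, conj_im]
  ring

theorem compare_norm_sub_norm_one_sub_conj_mul {a : ℂ} (ha : ‖a‖ < 1) (z : ℂ) :
    compare ‖z - a‖ ‖1 - conj a * z‖ = compare ‖z‖ 1 := by
  have hid := norm_one_sub_conj_mul_sq_sub_norm_sub_sq a z
  have ha2 : 0 < 1 - ‖a‖ ^ 2 := by nlinarith [norm_nonneg a]
  have h0 := norm_nonneg (z - a)
  have h1 := norm_nonneg (1 - conj a * z)
  have hz := norm_nonneg z
  rcases lt_trichotomy ‖z‖ 1 with h | h | h
  · rw [compare_lt_iff_lt.2 h, compare_lt_iff_lt, ← pow_lt_pow_iff_left₀ h0 h1 two_ne_zero]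
    nlinarith [mul_pos ha2 (by nlinarith : 0 < 1 - ‖z‖ ^ 2)]
  · rw [compare_eq_iff_eq.2 h, compare_eq_iff_eq, ← pow_left_inj₀ h0 h1 two_ne_zero]
    rw [h] at hid
    linarith
  · rw [compare_gt_iff_gt.2 h, compare_gt_iff_gt, ← pow_lt_pow_iff_left₀ h1 h0 two_ne_zero]
    nlinarith [mul_pos ha2 (by nlinarith : 0 < ‖z‖ ^ 2 - 1)]

section

variable {ι R : Type*} [CommSemiring R] [LinearOrder R] [IsStrictOrderedRing R]
  {s : Finset ι} {f g : ι → R}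

theorem Finset.prod_lt_prod_of_nonempty_of_nonneg (hs : s.Nonempty) (hf : ∀ i ∈ s, 0 ≤ f i)
    (hfg : ∀ i ∈ s, f i < g i) : ∏ i ∈ s, f i < ∏ i ∈ s, g i := by
  have hg : 0 < ∏ i ∈ s, g i := prod_pos fun i hi => (hf i hi).trans_lt (hfg i hi)
  by_cases hpos : ∀ i ∈ s, 0 < f i
  · exact prod_lt_prod_of_nonempty hpos hfg hs
  · push Not at hpos
    obtain ⟨i, hi, hfi⟩ := hpos
    rwa [prod_eq_zero hi (le_antisymm hfi (hf i hi))]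

theorem Finset.compare_prod_prod_of_forall (hs : s.Nonempty) (hf : ∀ i ∈ s, 0 ≤ f i)
    (hg : ∀ i ∈ s, 0 ≤ g i) {o : Ordering} (hfg : ∀ i ∈ s, compare (f i) (g i) = o) :
    compare (∏ i ∈ s, f i) (∏ i ∈ s, g i) = o := by
  cases o
  · exact compare_lt_iff_lt.2 <| prod_lt_prod_of_nonempty_of_nonneg hs hf
      fun i hi => compare_lt_iff_lt.1 (hfg i hi)
  · exact compare_eq_iff_eq.2 <| prod_congr rfl fun i hi => compare_eq_iff_eq.1 (hfg i hi)
  · exact compare_gt_iff_gt.2 <| prod_lt_prod_of_nonempty_of_nonneg hs hg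
      fun i hi => compare_gt_iff_gt.1 (hfg i hi)

end

theorem compare_eq_compare_of_mul_eq_mul {R : Type*} [CommRing R] [LinearOrder R]
    [IsStrictOrderedRing R] {a b c d : R} (hb : 0 < b) (hd : 0 < d) (h : a * d = c * b) :
    compare a b = compare c d := by
  rcases lt_trichotomy a b with hab | rfl | hab
  · rw [compare_lt_iff_lt.2 hab, eq_comm, compare_lt_iff_lt]
    by_contra! hdc
    nlinarith [mul_le_mul_of_nonneg_right hdc hb.le, mul_lt_mul_of_pos_right hab hd]
  · rw [compare_eq_iff_eq.2 rfl, eq_comm, compare_eq_iff_eq]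
    exact (mul_left_cancel₀ hb.ne' (h.trans (mul_comm c a))).symm
  · rw [compare_gt_iff_gt.2 hab, eq_comm, compare_gt_iff_gt]
    by_contra! hcd
    nlinarith [mul_le_mul_of_nonneg_right hcd hb.le, mul_lt_mul_of_pos_right hab hd]

theorem compare_norm_prod_sub_norm_prod_one_sub_conj_mul {ι : Type*} [Fintype ι] [Nonempty ι]
    {α : ι → ℂ} (hα : ∀ i, ‖α i‖ < 1) (z : ℂ) :
    compare ‖∏ i, (z - α i)‖ ‖∏ i, (1 - conj (α i) * z)‖ = compare ‖z‖ 1 := by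
  rw [norm_prod, norm_prod]
  exact compare_prod_prod_of_forall univ_nonempty (fun _ _ => norm_nonneg _)
    (fun _ _ => norm_nonneg _) fun i _ => compare_norm_sub_norm_one_sub_conj_mul (hα i) z

theorem trichotomy_of_compare_one_eq {x y : ℝ} (h : compare x 1 = compare y 1) :
    (x < 1 ∧ y < 1) ∨ (x = 1 ∧ y = 1) ∨ (1 < x ∧ 1 < y) := by
  rcases hx : compare x 1 with _ | _ | _ <;> rw [hx, eq_comm] at h
  · exact .inl ⟨compare_lt_iff_lt.1 hx, compare_lt_iff_lt.1 h⟩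
  · exact .inr <| .inl ⟨compare_eq_iff_eq.1 hx, compare_eq_iff_eq.1 h⟩
  · exact .inr <| .inr ⟨compare_gt_iff_gt.1 hx, compare_gt_iff_gt.1 h⟩

/-- The zero set of `F(z,w) = (p(z)p~(w) − p(w)p~(z))/(z−w)` for a finite Blaschke
product `f = p~/p` is contained in `(𝔻×𝔻) ∪ (𝕋×𝕋) ∪ (𝔼×𝔼)` (at points where
`p(z)p(w) ≠ 0`). -/
theorem stmt_12 (m : ℕ) (hm : 0 < m) (α : Fin m → ℂ)
    (hα : ∀ i, ‖α i‖ < 1)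
    (p pt : ℂ → ℂ)
    (hp : ∀ z : ℂ, p z = ∏ i, (1 - (starRingEnd ℂ) (α i) * z))
    (hpt : ∀ z : ℂ, pt z = ∏ i, (z - α i))
    (F : ℂ → ℂ → ℂ)
    (hF : ∀ z w : ℂ, (z - w) * F z w = p z * pt w - p w * pt z)
    (z w : ℂ) (hden : p z * p w ≠ 0) (hzero : F z w = 0) :
    (‖z‖ < 1 ∧ ‖w‖ < 1) ∨
    (‖z‖ = 1 ∧ ‖w‖ = 1) ∨
    (1 < ‖z‖ ∧ 1 < ‖w‖) := by
  have : Nonempty (Fin m) := Fin.pos_iff_nonempty.mp hm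
  have hcross : pt z * p w = pt w * p z := by
    have h := hF z w
    rw [hzero, mul_zero] at h
    linear_combination h
  have hnorm : ‖pt z‖ * ‖p w‖ = ‖pt w‖ * ‖p z‖ := by
    rw [← norm_mul, ← norm_mul, hcross]
  apply trichotomy_of_compare_one_eq
  rw [← compare_norm_prod_sub_norm_prod_one_sub_conj_mul hα z,
    ← compare_norm_prod_sub_norm_prod_one_sub_conj_mul hα w, ← hp, ← hp, ← hpt, ← hpt]
  exact compare_eq_compare_of_mul_eq_mul (norm_pos_iff.2 (left_ne_zero_of_mul hden))
    (norm_pos_iff.2 (right_ne_zero_of_mul hden)) hnorm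
end

section
/- Given β₁, β₂ distinct points in the open unit disk and constants C₁, C₂ ∈ ℂ with C₁C₂ ≠ 0 and |C₂/C₁| determined so the problem is solvable, there is at most one γ in the open unit disk such that C₁ m_γ(β₁) = C₂ m_γ(β₂), where m_γ(z) = (γ − z)/(1 − conj(γ)z). -/
open Complex Metric ComplexConjugate

/-! Clearing denominators, a solution `γ` satisfies
`(C₁ - C₂)(β₁ + β₂ - γ - β₁β₂γ̄) = (C₁β₂ - C₂β₁)(1 - |γ|²)`, which rules out `C₁ = C₂`.
Subtracting `β₁β₂` times the conjugate relation eliminates `γ̄` and leaves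
`q γ + (1 - |γ|²) d = σ` with `q = 1 - |β₁β₂|²`, `σ = (1 - |β₂|²)β₁ + (1 - |β₁|²)β₂`
and `d` independent of `γ`; moreover `|σ| ≤ q`. For two solutions `x, y` of this equation,
eliminating `d` and taking norms gives `|b - a|(1 + ab) ≤ |b - a|(a + b)` for `a = |x|`, `b = |y|`;
since `1 + ab > a + b` in the disk, `a = b`, and then `x = y`. -/

section NormedSpace

variable {E : Type*} [NormedAddCommGroup E] [NormedSpace ℝ E]

theorem norm_smul_add_smul_le_one_sub {x y : E} (hx : ‖x‖ ≤ 1) (hy : ‖y‖ ≤ 1) :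
    ‖(1 - ‖y‖ ^ 2) • x + (1 - ‖x‖ ^ 2) • y‖ ≤ 1 - ‖x‖ ^ 2 * ‖y‖ ^ 2 := by
  have hx0 := norm_nonneg x
  have hy0 := norm_nonneg y
  calc ‖(1 - ‖y‖ ^ 2) • x + (1 - ‖x‖ ^ 2) • y‖
      ≤ (1 - ‖y‖ ^ 2) * ‖x‖ + (1 - ‖x‖ ^ 2) * ‖y‖ := by
        refine (norm_add_le _ _).trans_eq ?_
        rw [norm_smul_of_nonneg (by nlinarith), norm_smul_of_nonneg (by nlinarith)]
    _ ≤ 1 - ‖x‖ ^ 2 * ‖y‖ ^ 2 := by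
        -- the gap is `(1 - ‖x‖) (1 - ‖y‖) (1 - ‖x‖ ‖y‖)`
        nlinarith [mul_nonneg (mul_nonneg (sub_nonneg.2 hx) (sub_nonneg.2 hy))
          (sub_nonneg.2 (mul_le_one₀ hx hy0 hy))]

theorem eq_of_smul_add_one_sub_norm_sq_smul_eq {q : ℝ} {d s x y : E} (hq : 0 < q)
    (hs : ‖s‖ ≤ q) (hx : ‖x‖ < 1) (hy : ‖y‖ < 1)
    (hxs : q • x + (1 - ‖x‖ ^ 2) • d = s) (hys : q • y + (1 - ‖y‖ ^ 2) • d = s) :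
    x = y := by
  have hx0 := norm_nonneg x
  have hy0 := norm_nonneg y
  have hd : (‖y‖ ^ 2 - ‖x‖ ^ 2) • s = q • ((1 - ‖x‖ ^ 2) • y - (1 - ‖y‖ ^ 2) • x) := by
    subst hxs
    linear_combination (norm := module) -(1 - ‖x‖ ^ 2) • hys
  have hgap : |(1 - ‖x‖ ^ 2) * ‖y‖ - (1 - ‖y‖ ^ 2) * ‖x‖| ≤ |‖y‖ ^ 2 - ‖x‖ ^ 2| := by
    refine le_of_mul_le_mul_left ?_ hq
    calc q * |(1 - ‖x‖ ^ 2) * ‖y‖ - (1 - ‖y‖ ^ 2) * ‖x‖|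
        ≤ q * ‖(1 - ‖x‖ ^ 2) • y - (1 - ‖y‖ ^ 2) • x‖ := by
          gcongr
          refine (le_of_eq ?_).trans (abs_norm_sub_norm_le _ _)
          rw [norm_smul_of_nonneg (by nlinarith), norm_smul_of_nonneg (by nlinarith)]
      _ = |‖y‖ ^ 2 - ‖x‖ ^ 2| * ‖s‖ := by
          rw [← norm_smul_of_nonneg hq.le, ← hd, norm_smul, Real.norm_eq_abs]
      _ ≤ q * |‖y‖ ^ 2 - ‖x‖ ^ 2| := by
          rw [mul_comm q]; gcongr
  have hnorm : ‖x‖ = ‖y‖ := by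
    -- `hgap` says `|b - a| (1 + a b) ≤ |b - a| (a + b)` for `a = ‖x‖`, `b = ‖y‖`
    have hsq := sq_le_sq.2 hgap
    have hpos : 0 < (1 - ‖x‖ ^ 2) * (1 - ‖y‖ ^ 2) := by
      apply mul_pos <;> nlinarith
    have hle : (‖y‖ - ‖x‖) ^ 2 * ((1 - ‖x‖ ^ 2) * (1 - ‖y‖ ^ 2)) ≤ 0 := by linarith
    have := pow_eq_zero_iff (n := 2) (by norm_num) |>.1 <|
      le_antisymm (nonpos_of_mul_nonpos_left hle hpos) (sq_nonneg _)
    linarith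
  have hy2 : 1 - ‖y‖ ^ 2 ≠ 0 := by nlinarith
  rw [hnorm, sub_self, zero_smul, ← smul_sub, eq_comm,
    smul_eq_zero_iff_right hq.ne', smul_eq_zero_iff_right hy2, sub_eq_zero] at hd
  exact hd.symm

end NormedSpace

theorem one_sub_conj_mul_ne_zero_s14 {γ β : ℂ} (hγ : ‖γ‖ < 1) (hβ : ‖β‖ < 1) :
    1 - conj γ * β ≠ 0 := by
  have : ‖conj γ * β‖ < 1 := by
    rw [norm_mul, Complex.norm_conj]
    exact mul_lt_one_of_nonneg_of_lt_one_left (norm_nonneg _) hγ hβ.le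
  intro h
  rw [← sub_eq_zero.1 h, norm_one] at this
  exact this.false

theorem mul_add_sub_eq_of_mul_moebius_eq {β₁ β₂ γ C₁ C₂ : ℂ} (hβ₁ : ‖β₁‖ < 1)
    (hβ₂ : ‖β₂‖ < 1) (hγ : ‖γ‖ < 1)
    (h : C₁ * ((γ - β₁) / (1 - conj γ * β₁)) = C₂ * ((γ - β₂) / (1 - conj γ * β₂))) :
    (C₁ - C₂) * (β₁ + β₂ - γ - β₁ * β₂ * conj γ) = (C₁ * β₂ - C₂ * β₁) * (1 - ‖γ‖ ^ 2) := by
  rw [mul_div_assoc', mul_div_assoc', div_eq_div_iff (one_sub_conj_mul_ne_zero_s14 hγ hβ₁)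
    (one_sub_conj_mul_ne_zero_s14 hγ hβ₂)] at h
  linear_combination -h - (C₁ * β₂ - C₂ * β₁) * Complex.mul_conj' γ

theorem ne_of_mul_moebius_eq {β₁ β₂ γ C₁ C₂ : ℂ} (hβ₁ : ‖β₁‖ < 1) (hβ₂ : ‖β₂‖ < 1)
    (hγ : ‖γ‖ < 1) (hβ : β₁ ≠ β₂) (hC₁ : C₁ ≠ 0)
    (h : C₁ * ((γ - β₁) / (1 - conj γ * β₁)) = C₂ * ((γ - β₂) / (1 - conj γ * β₂))) :
    C₁ ≠ C₂ := by
  rintro rfl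
  have hrel := mul_add_sub_eq_of_mul_moebius_eq hβ₁ hβ₂ hγ h
  rw [sub_self, zero_mul, ← mul_sub, eq_comm] at hrel
  have hγ2 : (1 - ‖γ‖ ^ 2 : ℂ) ≠ 0 := by
    exact_mod_cast (by nlinarith [norm_nonneg γ] : (1 - ‖γ‖ ^ 2 : ℝ) ≠ 0)
  exact mul_ne_zero (mul_ne_zero hC₁ (sub_ne_zero.2 hβ.symm)) hγ2 hrel

theorem one_sub_norm_sq_smul_add_one_sub_norm_sq_smul_eq {a b s p γ : ℂ} (ha : a ≠ 0)
    (hab : a * (s - γ - p * conj γ) = b * (1 - ‖γ‖ ^ 2)) :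
    (1 - ‖p‖ ^ 2) • γ + (1 - ‖γ‖ ^ 2) • (b / a - p * conj (b / a)) = s - p * conj s := by
  have h : s - γ - p * conj γ = b / a * (1 - ‖γ‖ ^ 2) := by
    rw [div_mul_eq_mul_div, eq_div_iff ha]
    linear_combination hab
  have hconj := congrArg conj h
  simp only [map_sub, map_mul, map_one, map_pow, Complex.conj_conj, Complex.conj_ofReal] at hconj
  simp only [Complex.real_smul]
  push_cast
  linear_combination -h + p * hconj + γ * Complex.mul_conj' p

theorem norm_add_sub_mul_conj_add_le {β₁ β₂ : ℂ} (hβ₁ : ‖β₁‖ ≤ 1) (hβ₂ : ‖β₂‖ ≤ 1) :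
    ‖β₁ + β₂ - β₁ * β₂ * conj (β₁ + β₂)‖ ≤ 1 - ‖β₁ * β₂‖ ^ 2 := by
  have hS : β₁ + β₂ - β₁ * β₂ * conj (β₁ + β₂) = (1 - ‖β₂‖ ^ 2) • β₁ + (1 - ‖β₁‖ ^ 2) • β₂ := by
    simp only [Complex.real_smul, map_add]
    push_cast
    linear_combination -β₂ * Complex.mul_conj' β₁ - β₁ * Complex.mul_conj' β₂
  rw [hS, norm_mul, mul_pow]
  exact norm_smul_add_smul_le_one_sub hβ₁ hβ₂

theorem stmt_14_general (β₁ β₂ : ℂ) (hβ₁ : β₁ ∈ ball (0 : ℂ) 1) (hβ₂ : β₂ ∈ ball (0 : ℂ) 1)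
    (hβ : β₁ ≠ β₂) (C₁ C₂ : ℂ) (hC₁ : C₁ ≠ 0)
    (mob : ℂ → ℂ → ℂ)
    (hmob : ∀ γ z : ℂ, mob γ z = (γ - z) / (1 - (starRingEnd ℂ) γ * z)) :
    ∀ γ ∈ ball (0 : ℂ) 1, ∀ γ' ∈ ball (0 : ℂ) 1,
      C₁ * mob γ β₁ = C₂ * mob γ β₂ →
      C₁ * mob γ' β₁ = C₂ * mob γ' β₂ → γ = γ' := by
  intro γ hγ γ' hγ' h h'
  rw [mem_ball_zero_iff] at hβ₁ hβ₂ hγ hγ'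
  simp only [hmob] at h h'
  have hC : C₁ - C₂ ≠ 0 := sub_ne_zero.2 (ne_of_mul_moebius_eq hβ₁ hβ₂ hγ hβ hC₁ h)
  have hq : 0 < 1 - ‖β₁ * β₂‖ ^ 2 := by
    rw [norm_mul, sub_pos]
    exact pow_lt_one₀ (by positivity)
      (mul_lt_one_of_nonneg_of_lt_one_left (norm_nonneg _) hβ₁ hβ₂.le) two_ne_zero
  exact eq_of_smul_add_one_sub_norm_sq_smul_eq hq
    (norm_add_sub_mul_conj_add_le hβ₁.le hβ₂.le) hγ hγ'
    (one_sub_norm_sq_smul_add_one_sub_norm_sq_smul_eq hC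
      (mul_add_sub_eq_of_mul_moebius_eq hβ₁ hβ₂ hγ h))
    (one_sub_norm_sq_smul_add_one_sub_norm_sq_smul_eq hC
      (mul_add_sub_eq_of_mul_moebius_eq hβ₁ hβ₂ hγ' h'))

/-- For fixed distinct `β₁, β₂` in the unit disk and nonzero constants `C₁, C₂`, there
is at most one `γ` in the unit disk with `C₁ m_γ(β₁) = C₂ m_γ(β₂)`. -/
theorem stmt_14 (β₁ β₂ : ℂ) (hβ₁ : β₁ ∈ ball (0 : ℂ) 1) (hβ₂ : β₂ ∈ ball (0 : ℂ) 1)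
    (hβ : β₁ ≠ β₂) (C₁ C₂ : ℂ) (hC₁ : C₁ ≠ 0) (hC₂ : C₂ ≠ 0)
    (mob : ℂ → ℂ → ℂ)
    (hmob : ∀ γ z : ℂ, mob γ z = (γ - z) / (1 - (starRingEnd ℂ) γ * z)) :
    ∀ γ ∈ ball (0 : ℂ) 1, ∀ γ' ∈ ball (0 : ℂ) 1,
      C₁ * mob γ β₁ = C₂ * mob γ β₂ →
      C₁ * mob γ' β₁ = C₂ * mob γ' β₂ → γ = γ' :=
  stmt_14_general β₁ β₂ hβ₁ hβ₂ hβ C₁ C₂ hC₁ mob hmob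
end

section
/- Let u be a continuous real-valued function on the disjoint union of two unit circles ∂𝔻⁺ and ∂𝔻⁻ (boundaries of two disks joined at their centers 0⁺, 0⁻). Then u is the real part of the boundary values of a function f holomorphic on 𝔻⁺ ∪ 𝔻⁻ with f(0⁺) = f(0⁻) (i.e., holomorphic on V = {z² = w²} ∩ 𝔻²) if and only if the mean of u over ∂𝔻⁺ equals the mean of u over ∂𝔻⁻. -/
/-!
Necessity is the mean-value property: if `g = Re f` in the disk and `g = u` on the circle, then
`g` is harmonic and continuous up to the boundary, so the mean of `u` over the circle is
`Re f(0)`.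

Sufficiency is the Dirichlet problem, solved by the Schwarz integral
`f(w) = ⨍ (ζ + w) / (ζ - w) u(ζ)`: it is holomorphic in the disk, `f(0)` is the (real) mean of
`u`, and `Re f` is the Poisson integral of `u`. The Poisson integral has a positive kernel of
mass one, so it is a contraction for the sup norm, and it reproduces `Re h` for entire `h`.
Since trigonometric polynomials are dense, `u` is a uniform limit of such `Re h` on the circle,
so the Poisson integral extended by `u` is a uniform limit of continuous functions on the closed
disk. The Schwarz integrals of `u⁺` and `u⁻` then agree at `0` exactly when their means do.
-/

open Complex Metric Real intervalIntegral InnerProductSpace ComplexConjugate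

lemma exists_differentiable_eq_add_conj_of_mem_span_fourier {T : ℝ} {v : C(AddCircle T, ℂ)}
    (hv : v ∈ Submodule.span ℂ (Set.range (@fourier T))) :
    ∃ F G : ℂ → ℂ, Differentiable ℂ F ∧ Differentiable ℂ G ∧
      ∀ x, v x = F (AddCircle.toCircle x) + conj (G (AddCircle.toCircle x)) := by
  induction hv using Submodule.span_induction with
  | mem v hv =>
    obtain ⟨n, rfl⟩ := hv
    have hpow (x : AddCircle T) : fourier n x = (AddCircle.toCircle x : ℂ) ^ n := by
      rw [fourier_apply, AddCircle.toCircle_zsmul, Circle.coe_zpow]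
    rcases le_or_gt 0 n with hn | hn
    · refine ⟨(· ^ n.toNat), 0, differentiable_pow _, differentiable_const _, fun x => ?_⟩
      simp only [hpow, Pi.zero_apply, map_zero, add_zero]
      rw [← zpow_natCast, Int.toNat_of_nonneg hn]
    · refine ⟨0, (· ^ (-n).toNat), differentiable_const _, differentiable_pow _, fun x => ?_⟩
      simp only [hpow, Pi.zero_apply, zero_add]
      rw [map_pow, ← Circle.coe_inv_eq_conj, Circle.coe_inv,
        inv_pow, ← zpow_natCast, Int.toNat_of_nonneg (by omega), ← zpow_neg, neg_neg]
  | zero => exact ⟨0, 0, differentiable_const _, differentiable_const _, by simp⟩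
  | add v₁ v₂ _ _ ih₁ ih₂ =>
    obtain ⟨F₁, G₁, hF₁, hG₁, h₁⟩ := ih₁
    obtain ⟨F₂, G₂, hF₂, hG₂, h₂⟩ := ih₂
    refine ⟨F₁ + F₂, G₁ + G₂, hF₁.add hF₂, hG₁.add hG₂, fun x => ?_⟩
    simp only [ContinuousMap.add_apply, h₁, h₂, Pi.add_apply, map_add]
    ring
  | smul c v _ ih =>
    obtain ⟨F, G, hF, hG, h⟩ := ih
    refine ⟨fun z => c * F z, fun z => conj c * G z, (differentiable_const _).mul hF,
      (differentiable_const _).mul hG, fun x => ?_⟩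
    simp only [ContinuousMap.smul_apply, smul_eq_mul, h, map_mul, conj_conj]
    ring

variable {u v : ℂ → ℝ} {w : ℂ}

lemma exists_differentiable_abs_sub_re_lt (hu : ContinuousOn u (sphere 0 1))
    {ε : ℝ} (hε : 0 < ε) :
    ∃ h : ℂ → ℂ, Differentiable ℂ h ∧
      ∀ z ∈ sphere (0 : ℂ) 1, |u z - (h z).re| < ε := by
  let φ : C(AddCircle (1 : ℝ), ℂ) :=
    ⟨fun x => (u (AddCircle.toCircle x) : ℂ), continuous_ofReal.comp <|
      hu.comp_continuous (continuous_subtype_val.comp AddCircle.continuous_toCircle)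
        fun x => (AddCircle.toCircle x).2⟩
  have hφ : φ ∈ closure (Submodule.span ℂ (Set.range (@fourier (1 : ℝ))) :
      Set C(AddCircle (1 : ℝ), ℂ)) := by
    rw [← Submodule.topologicalClosure_coe, span_fourier_closure_eq_top]
    trivial
  obtain ⟨ψ, hψ, hφψ⟩ := Metric.mem_closure_iff.1 hφ ε hε
  obtain ⟨F, G, hF, hG, hFG⟩ := exists_differentiable_eq_add_conj_of_mem_span_fourier hψ
  -- `F + conj G` and `F + G` have the same real part.
  refine ⟨F + G, hF.add hG, fun z hz => ?_⟩
  obtain ⟨x, hx⟩ := (AddCircle.homeomorphCircle one_ne_zero).surjective ⟨z, hz⟩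
  rw [AddCircle.homeomorphCircle_apply] at hx
  have hre : (F z + G z).re = (ψ x).re := by
    rw [hFG, hx, add_re, add_re, conj_re]
  calc |u z - (F z + G z).re| = |(φ x - ψ x).re| := by
        rw [hre, sub_re]
        simp only [φ, ContinuousMap.coe_mk, hx, ofReal_re]
    _ ≤ dist (φ x) (ψ x) := by rw [Complex.dist_eq]; exact abs_re_le_norm _
    _ ≤ dist φ ψ := ContinuousMap.dist_apply_le_dist x
    _ < ε := hφψ

lemma poissonKernel_nonneg_of_mem_sphere {ζ : ℂ} (hζ : ζ ∈ sphere (0 : ℂ) 1)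
    (hw : w ∈ ball (0 : ℂ) 1) : 0 ≤ poissonKernel 0 w ζ := by
  rw [mem_sphere_zero_iff_norm] at hζ
  rw [mem_ball_zero_iff] at hw
  rw [poissonKernel_def, sub_zero, sub_zero, hζ]
  exact div_nonneg (by nlinarith [norm_nonneg w]) (sq_nonneg _)

lemma continuousOn_poissonKernel_sphere (hw : w ∈ ball (0 : ℂ) 1) :
    ContinuousOn (poissonKernel 0 w) (sphere 0 1) := by
  rw [poissonKernel_eq_re_herglotzRieszKernel]
  simpa using continuous_re.comp_continuousOn (continuousOn_herglotzRieszKernel_sphere (R := 1) hw)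

lemma circleIntegrable_poissonKernel_smul (hv : ContinuousOn v (sphere 0 1))
    (hw : w ∈ ball (0 : ℂ) 1) : CircleIntegrable (poissonKernel 0 w • v) 0 1 :=
  ((continuousOn_poissonKernel_sphere hw).smul hv).circleIntegrable zero_le_one

lemma abs_circleAverage_poissonKernel_smul_le {ε : ℝ} (hv : ContinuousOn v (sphere 0 1))
    (hvε : ∀ z ∈ sphere (0 : ℂ) 1, |v z| ≤ ε) (hw : w ∈ ball (0 : ℂ) 1) :
    |circleAverage (poissonKernel 0 w • v) 0 1| ≤ ε := by
  calc |circleAverage (poissonKernel 0 w • v) 0 1|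
      ≤ circleAverage |poissonKernel 0 w • v| 0 1 := abs_circleAverage_le_circleAverage_abs
    _ ≤ circleAverage (poissonKernel 0 w • fun _ => ε) 0 1 := by
      refine circleAverage_mono (circleIntegrable_poissonKernel_smul hv hw).abs
        (circleIntegrable_poissonKernel_smul continuousOn_const hw) fun z hz => ?_
      rw [abs_one] at hz
      have hP := poissonKernel_nonneg_of_mem_sphere hz hw
      simp only [Pi.abs_apply, smul_eq_mul, Pi.mul_apply, abs_mul, abs_of_nonneg hP]
      exact mul_le_mul_of_nonneg_left (hvε z hz) hP
    _ = ε := harmonicContOnCl_const.circleAverage_poissonKernel_smul hw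

lemma abs_circleAverage_poissonKernel_smul_sub_le {ε : ℝ} (hu : ContinuousOn u (sphere 0 1))
    (hv : ContinuousOn v (sphere 0 1)) (huv : ∀ z ∈ sphere (0 : ℂ) 1, |u z - v z| ≤ ε)
    (hw : w ∈ ball (0 : ℂ) 1) :
    |circleAverage (poissonKernel 0 w • u) 0 1 - circleAverage (poissonKernel 0 w • v) 0 1|
      ≤ ε := by
  rw [← circleAverage_sub (circleIntegrable_poissonKernel_smul hu hw)
    (circleIntegrable_poissonKernel_smul hv hw), ← smul_sub]
  exact abs_circleAverage_poissonKernel_smul_le (hu.sub hv) huv hw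

noncomputable def schwarzIntegral (u : ℂ → ℝ) (w : ℂ) : ℂ :=
  circleAverage (fun ζ => herglotzRieszKernel 0 w ζ • (u ζ : ℂ)) 0 1

lemma differentiableOn_schwarzIntegral (hu : ContinuousOn u (sphere 0 1)) :
    DifferentiableOn ℂ (schwarzIntegral u) (ball 0 1) :=
  differentiableOn_circleAverage_herglotzRieszKernel_smul
    ((continuous_ofReal.comp_continuousOn hu).circleIntegrable zero_le_one)

lemma schwarzIntegral_zero (hu : ContinuousOn u (sphere 0 1)) :
    schwarzIntegral u 0 = circleAverage u 0 1 := by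
  have hker : Set.EqOn (fun ζ => herglotzRieszKernel 0 0 ζ • (u ζ : ℂ)) (ofRealCLM ∘ u)
      (sphere 0 |1|) := fun ζ hζ => by
    have hζ0 : ζ ≠ 0 := by rintro rfl; simp at hζ
    simp [herglotzRieszKernel_def, hζ0]
  rw [schwarzIntegral, circleAverage_congr_sphere hker,
    ofRealCLM.circleAverage_comp_comm (hu.circleIntegrable zero_le_one)]
  rfl

lemma re_schwarzIntegral (hu : ContinuousOn u (sphere 0 1)) (hw : w ∈ ball (0 : ℂ) 1) :
    (schwarzIntegral u w).re = circleAverage (poissonKernel 0 w • u) 0 1 := by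
  rw [schwarzIntegral, re_circleAverage_herglotzRieszKernel_smul
    (hu.circleIntegrable zero_le_one) hw, poissonKernel_eq_re_herglotzRieszKernel]

lemma circleAverage_poissonKernel_smul_re {h : ℂ → ℂ} (hh : Differentiable ℂ h)
    (hw : w ∈ ball (0 : ℂ) 1) :
    circleAverage (poissonKernel 0 w • fun z => (h z).re) 0 1 = (h w).re :=
  HarmonicOnNhd.circleAverage_poissonKernel_smul (fun x _ => (hh.analyticAt x).harmonicAt_re) hw

lemma continuousOn_of_eq_re_schwarzIntegral {g : ℂ → ℝ} (hu : ContinuousOn u (sphere 0 1))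
    (hgf : ∀ z ∈ ball (0 : ℂ) 1, g z = (schwarzIntegral u z).re)
    (hgu : ∀ z ∈ sphere (0 : ℂ) 1, g z = u z) :
    ContinuousOn g (closedBall 0 1) := by
  refine continuousOn_of_uniform_approx_of_continuousOn fun U hU => ?_
  obtain ⟨ε, hε, hεU⟩ := Metric.mem_uniformity_dist.1 hU
  obtain ⟨h, hh, hhu⟩ := exists_differentiable_abs_sub_re_lt hu (half_pos hε)
  have hre : Continuous fun z => (h z).re := continuous_re.comp hh.continuous
  refine ⟨fun z => (h z).re, hre.continuousOn, fun z hz => hεU ?_⟩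
  rw [Real.dist_eq]
  dsimp only
  by_cases hz1 : z ∈ ball 0 1
  · rw [hgf z hz1, re_schwarzIntegral hu hz1, ← circleAverage_poissonKernel_smul_re hh hz1]
    exact (abs_circleAverage_poissonKernel_smul_sub_le hu hre.continuousOn
      (fun ζ hζ => (hhu ζ hζ).le) hz1).trans_lt (half_lt_self hε)
  · have hz1' : z ∈ sphere 0 1 := mem_sphere.2 (le_antisymm hz (not_lt.1 hz1))
    rw [hgu z hz1']
    exact (hhu z hz1').trans (half_lt_self hε)

theorem exists_differentiableOn_re_eq_on_sphere (hu : ContinuousOn u (sphere 0 1)) :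
    ∃ f : ℂ → ℂ, ∃ g : ℂ → ℝ, DifferentiableOn ℂ f (ball 0 1) ∧
      ContinuousOn g (closedBall 0 1) ∧ (∀ z ∈ ball (0 : ℂ) 1, g z = (f z).re) ∧
      (∀ z ∈ sphere (0 : ℂ) 1, g z = u z) ∧ f 0 = circleAverage u 0 1 := by
  classical
  let g := (ball 0 1).piecewise (fun z => (schwarzIntegral u z).re) u
  have hgf (z) (hz : z ∈ ball (0 : ℂ) 1) : g z = (schwarzIntegral u z).re :=
    Set.piecewise_eq_of_mem _ _ _ hz
  have hgu (z) (hz : z ∈ sphere (0 : ℂ) 1) : g z = u z :=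
    Set.piecewise_eq_of_notMem _ _ _ (by rw [mem_ball, not_lt, mem_sphere.1 hz])
  exact ⟨schwarzIntegral u, g, differentiableOn_schwarzIntegral hu,
    continuousOn_of_eq_re_schwarzIntegral hu hgf hgu, hgf, hgu, schwarzIntegral_zero hu⟩

theorem circleAverage_eq_re_apply_center {c : ℂ} {R : ℝ} (hR : 0 < R)
    {f : ℂ → ℂ} {g : ℂ → ℝ} (hf : DifferentiableOn ℂ f (ball c R))
    (hg : ContinuousOn g (closedBall c R)) (hgf : ∀ z ∈ ball c R, g z = (f z).re)
    (hgu : ∀ z ∈ sphere c R, g z = u z) :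
    circleAverage u c R = (f c).re := by
  have hharm : HarmonicContOnCl g (ball c |R|) := by
    rw [abs_of_pos hR]
    refine ⟨fun z hz => ?_, by rwa [closure_ball c hR.ne']⟩
    have hfg : (fun z => (f z).re) =ᶠ[nhds z] g :=
      Filter.eventually_of_mem (isOpen_ball.mem_nhds hz) fun y hy => (hgf y hy).symm
    exact (harmonicAt_congr_nhds hfg).1 (hf.analyticAt (isOpen_ball.mem_nhds hz)).harmonicAt_re
  rw [← circleAverage_congr_sphere (f₁ := g) fun z hz => hgu z (by rwa [abs_of_pos hR] at hz),
    hharm.circleAverage_eq, hgf c (mem_ball_self hR)]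

lemma integral_comp_exp_mul_I :
    ∫ θ in (0 : ℝ)..(2 * π), u (exp (θ * I)) = 2 * π * circleAverage u 0 1 := by
  rw [circleAverage_def, smul_eq_mul, ← mul_assoc, mul_inv_cancel₀ two_pi_pos.ne', one_mul]
  simp [circleMap]

/-- On `V = {z² = w²} ∩ 𝔻²` (two unit disks `𝔻⁺, 𝔻⁻` joined at their centers), a
continuous real function `u = (u⁺, u⁻)` on the two boundary circles is the real part of
(the continuous boundary values of) a holomorphic function on `V` — i.e. a pair
`(f⁺, f⁻)` of holomorphic functions on `𝔻` with `f⁺(0) = f⁻(0)` — if and only if the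
mean of `u⁺` over `∂𝔻⁺` equals the mean of `u⁻` over `∂𝔻⁻`. -/
theorem stmt_18 (uP uM : ℂ → ℝ)
    (huP : ContinuousOn uP (sphere (0 : ℂ) 1))
    (huM : ContinuousOn uM (sphere (0 : ℂ) 1)) :
    (∃ fP fM : ℂ → ℂ, ∃ gP gM : ℂ → ℝ,
      DifferentiableOn ℂ fP (ball (0 : ℂ) 1) ∧
      DifferentiableOn ℂ fM (ball (0 : ℂ) 1) ∧
      fP 0 = fM 0 ∧
      ContinuousOn gP (closedBall (0 : ℂ) 1) ∧
      ContinuousOn gM (closedBall (0 : ℂ) 1) ∧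
      (∀ z ∈ ball (0 : ℂ) 1, gP z = (fP z).re) ∧
      (∀ z ∈ ball (0 : ℂ) 1, gM z = (fM z).re) ∧
      (∀ z ∈ sphere (0 : ℂ) 1, gP z = uP z) ∧
      (∀ z ∈ sphere (0 : ℂ) 1, gM z = uM z)) ↔
    (∫ θ in (0 : ℝ)..(2 * π), uP (Complex.exp (θ * Complex.I))) =
      ∫ θ in (0 : ℝ)..(2 * π), uM (Complex.exp (θ * Complex.I)) := by
  rw [integral_comp_exp_mul_I, integral_comp_exp_mul_I, mul_right_inj' two_pi_pos.ne']
  constructor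
  · rintro ⟨fP, fM, gP, gM, hfP, hfM, h0, hgP, hgM, hgPf, hgMf, hgPu, hgMu⟩
    rw [circleAverage_eq_re_apply_center one_pos hfP hgP hgPf hgPu,
      circleAverage_eq_re_apply_center one_pos hfM hgM hgMf hgMu, h0]
  · intro hmean
    obtain ⟨fP, gP, hfP, hgP, hgPf, hgPu, hP0⟩ := exists_differentiableOn_re_eq_on_sphere huP
    obtain ⟨fM, gM, hfM, hgM, hgMf, hgMu, hM0⟩ := exists_differentiableOn_re_eq_on_sphere huM
    exact ⟨fP, fM, gP, gM, hfP, hfM, by rw [hP0, hM0, hmean], hgP, hgM, hgPf, hgMf, hgPu, hgMu⟩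
end
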